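/- arXiv:2605.17430 — 2 statements merged into one kernel-verified Lean document; each statement's English description precedes it below -/
import Mathlib

section
/- There exist δ0 > 0 and n0 ∈ ℕ such that the following holds for all 0 < δ ≤ δ0 and n ≥ n0. Assume the Setup and the triangle-set definitions, and assume |D̄| ≤ 8δn. Then |ℬ1| + |ℬ[D]| ≤ 11√δ·n·|D̄| + n − 1. -/
open SimpleGraph

/-- The number of triangles (copies of `K₃`) in a graph `G`, i.e. `N(K₃, G)`. -/
noncomputable def triangleCount {V : Type*} (G : SimpleGraph V) : ℕ :=
  Set.ncard {s : Finset V | G.IsNClique 3 s}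

/-- `G` contains a subgraph isomorphic to `H`. -/
def Contains {W V : Type*} (H : SimpleGraph W) (G : SimpleGraph V) : Prop :=
  ∃ f : H →g G, Function.Injective f

/-- `G` is `H`-free: it contains no subgraph isomorphic to `H`. -/
def Free {W V : Type*} (H : SimpleGraph W) (G : SimpleGraph V) : Prop :=
  ¬ Contains H G

/-- The expansion `F^△` of a graph `F`: each edge `uv` of `F` is replaced by a triangle
`u v w_{uv}` where the new vertices `w_{uv}` are pairwise distinct and outside `V(F)`. -/
def expansion {V : Type*} (F : SimpleGraph V) : SimpleGraph (V ⊕ F.edgeSet) :=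
  SimpleGraph.fromRel (fun a b =>
    (∃ u v, a = Sum.inl u ∧ b = Sum.inl v ∧ F.Adj u v) ∨
    (∃ u, ∃ e : F.edgeSet, a = Sum.inl u ∧ b = Sum.inr e ∧ u ∈ (e : Sym2 V)))

/-- `C₄^△`, the expansion of the 4-edge cycle: a graph on 8 vertices. -/
def C4expansion : SimpleGraph ((Fin 4) ⊕ (SimpleGraph.cycleGraph 4).edgeSet) :=
  expansion (SimpleGraph.cycleGraph 4)

/-- The generalized Turán number `ex(n, K₃, H)`: the maximum number of triangles in an
`H`-free graph on `n` vertices. -/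
noncomputable def exTriangles (n : ℕ) {W : Type*} (H : SimpleGraph W) : ℕ :=
  sSup {k | ∃ G : SimpleGraph (Fin n), _root_.Free H G ∧ triangleCount G = k}

/-- `T(n)`: the complete bipartite graph on `Fin n` with parts
`X = {v : v < ⌊n/2⌋}` (of size `⌊n/2⌋`) and `Y = {v : v ≥ ⌊n/2⌋}` (of size `⌈n/2⌉`). -/
def Tgraph (n : ℕ) : SimpleGraph (Fin n) :=
  SimpleGraph.fromRel (fun u v => u.val < n / 2 ∧ n / 2 ≤ v.val)

/-- `T⁺(n)`: the graph `T(n)` with one extra edge (between vertices `0` and `1`) added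
inside the part `X`. -/
def TgraphPlus (n : ℕ) : SimpleGraph (Fin n) :=
  SimpleGraph.fromRel (fun u v =>
    (u.val < n / 2 ∧ n / 2 ≤ v.val) ∨ (u.val = 0 ∧ v.val = 1))

/-- `T⁼(n)`: the graph obtained from `T(n)` by adding the edge `e₁ = {0,1}` inside `X`,
adding the edge `e₂ = {⌊n/2⌋, ⌊n/2⌋+1}` inside `Y`, and deleting the perfect matching
`{0,⌊n/2⌋}, {1,⌊n/2⌋+1}` between the endpoints of `e₁` and of `e₂`. -/
def TgraphEq (n : ℕ) : SimpleGraph (Fin n) :=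
  SimpleGraph.fromRel (fun u v =>
    (u.val < n / 2 ∧ n / 2 ≤ v.val ∧
      ¬(u.val = 0 ∧ v.val = n / 2) ∧ ¬(u.val = 1 ∧ v.val = n / 2 + 1))
    ∨ (u.val = 0 ∧ v.val = 1) ∨ (u.val = n / 2 ∧ v.val = n / 2 + 1))

/-- The join `K₁ ⋈ H` of a single new vertex with the graph `H`. -/
def joinK1 {V : Type*} (H : SimpleGraph V) : SimpleGraph (Option V) :=
  SimpleGraph.fromRel (fun u v =>
    u = none ∨ ∃ a b, u = some a ∧ v = some b ∧ H.Adj a b)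

/-- `S(n) = K₁ ⋈ T(n-1)`. -/
def Sgraph (n : ℕ) : SimpleGraph (Option (Fin (n - 1))) := joinK1 (Tgraph (n - 1))

/-- `S⁺(n) = K₁ ⋈ T⁺(n-1)`. -/
def SgraphPlus (n : ℕ) : SimpleGraph (Option (Fin (n - 1))) := joinK1 (TgraphPlus (n - 1))

/-- `S⁼(n) = K₁ ⋈ T⁼(n-1)`. -/
def SgraphEq (n : ℕ) : SimpleGraph (Option (Fin (n - 1))) := joinK1 (TgraphEq (n - 1))

/-- `d_G(uv)`: the number of triangles of `G` containing the edge `uv`, i.e. the number of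
common neighbors of `u` and `v`. -/
noncomputable def edgeTriangleDeg {V : Type*} (G : SimpleGraph V) (u v : V) : ℕ :=
  {w : V | G.Adj u w ∧ G.Adj v w}.ncard

/-- `e_G(A, B)`: the number of edges of `G` with one endpoint in `A` and the other in `B`
(for disjoint `A`, `B`). -/
noncomputable def crossEdges {V : Type*} (G : SimpleGraph V) (A B : Set V) : ℕ :=
  {p : V × V | p.1 ∈ A ∧ p.2 ∈ B ∧ G.Adj p.1 p.2}.ncard


/-!
The triangles of `ℬ₁ ∪ ℬ[D]` through `x` and those avoiding `x` are counted separately.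

A triangle of `ℬ₁` through `x` is `{x, v, a}` with `v ∈ D̄`, `a ∈ D` and `v`, `a` on the same
side of the cut. Fix `v` and let `A`, `C` be its neighbours in `D` on its own and on the other
side. Maximality of the cut gives `|A| ≤ |C| + |D̄|`, and at most `2δn²` pairs between the parts
are non-edges. Two disjoint `A`–`C` edges `ac`, `a'c'` would make `x a v a'` a 4-cycle in which
`av`, `va'` have the apexes `c`, `c'`, while `xa`, `a'x` have so many common neighbours that
apexes for them can be chosen outside the six vertices used so far: a copy of `C₄^△`. So the
`A`–`C` edges form a star, `|A| |C| ≤ |A| + |C| + 2δn²`, and `|A| ≤ 11√δ n` follows.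

A triangle of `ℬ₁ ∪ ℬ[D]` avoiding `x` has at least two vertices in `D`. If two such triangles
met in exactly one vertex `u`, with `a`, `b` in `D` and third vertices `p`, `q`, then the 4-cycle
`x a u b` with the apexes `p`, `q` would again give a copy of `C₄^△`. A family of 3-sets no two
of which meet in exactly one point has at most as many members as it has points, here `n - 1`.
-/

-- The edge `s(i, i + 1)` of `C₄` is indexed by `i`; the value on non-edges is irrelevant.
def cycleEdgeIndex : Sym2 (Fin 4) → Fin 4 :=
  Sym2.lift ⟨fun i j => if j = i + 1 then i else if i = j + 1 then j else 0, by decide⟩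

lemma cycleGraph_four_adj {i j : Fin 4} (h : (cycleGraph 4).Adj i j) :
    j = i + 1 ∨ i = j + 1 := by
  revert i j; decide

lemma eq_cycleEdgeIndex_of_mem {e : Sym2 (Fin 4)} (he : e ∈ (cycleGraph 4).edgeSet)
    {i : Fin 4} (hi : i ∈ e) : i = cycleEdgeIndex e ∨ i = cycleEdgeIndex e + 1 := by
  revert e i; decide

lemma cycleEdgeIndex_injOn : Set.InjOn cycleEdgeIndex (cycleGraph 4).edgeSet := by
  intro e he e' he'; revert e e'; decide

lemma contains_C4expansion {V : Type*} {G : SimpleGraph V} (c w : Fin 4 → V)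
    (hnodup : (List.ofFn c ++ List.ofFn w).Nodup) (hc : ∀ i, G.Adj (c i) (c (i + 1)))
    (hw : ∀ i, G.Adj (c i) (w i) ∧ G.Adj (c (i + 1)) (w i)) : Contains C4expansion G := by
  obtain ⟨hcinj, hwinj, hdisj⟩ := List.nodup_append.1 hnodup
  have hcc : ∀ i j, (cycleGraph 4).Adj i j → G.Adj (c i) (c j) := fun i j hij => by
    rcases cycleGraph_four_adj hij with rfl | rfl
    exacts [hc i, (hc j).symm]
  have hcw : ∀ i (e : (cycleGraph 4).edgeSet), i ∈ (e : Sym2 (Fin 4)) →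
      G.Adj (c i) (w (cycleEdgeIndex e)) := fun i e hi => by
    rcases eq_cycleEdgeIndex_of_mem e.2 hi with rfl | rfl
    exacts [(hw _).1, (hw _).2]
  refine ⟨⟨Sum.elim c (w ∘ cycleEdgeIndex ∘ Subtype.val), ?_⟩, ?_⟩
  · rintro u v ⟨-, (⟨i, j, rfl, rfl, h⟩ | ⟨i, e, rfl, rfl, h⟩) |
      (⟨i, j, rfl, rfl, h⟩ | ⟨i, e, rfl, rfl, h⟩)⟩
    exacts [hcc i j h, hcw i e h, (hcc i j h).symm, (hcw i e h).symm]
  · refine (List.nodup_ofFn.1 hcinj).sumElim ((List.nodup_ofFn.1 hwinj).comp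
      fun e e' h => Subtype.ext (cycleEdgeIndex_injOn e.2 e'.2 h)) fun i e => ?_
    exact hdisj _ (List.mem_ofFn.2 ⟨i, rfl⟩) _ (List.mem_ofFn.2 ⟨_, rfl⟩)

lemma List.exists_mem_nodup_cons {α : Type*} {S : Set α} {L : List α} (hL : L.Nodup)
    (h : L.length < S.ncard) : ∃ w ∈ S, (w :: L).Nodup := by
  classical
  have hcard : {w | w ∈ L}.ncard < S.ncard := by
    rw [← List.coe_toFinset, Set.ncard_coe_finset]
    exact (List.toFinset_card_le L).trans_lt h
  obtain ⟨w, hwS, hwL⟩ := Set.exists_mem_notMem_of_ncard_lt_ncard hcard L.finite_toSet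
  exact ⟨w, hwS, List.nodup_cons.2 ⟨hwL, hL⟩⟩

theorem apex_eq_of_free_C4expansion {V : Type*} {G : SimpleGraph V}
    (hF : _root_.Free C4expansion G) {x a z b p q : V} (hxz : x ≠ z) (hab : a ≠ b)
    (hax : G.Adj a x) (hbx : G.Adj b x) (haz : G.Adj a z) (hbz : G.Adj b z)
    (ha : 8 ≤ edgeTriangleDeg G a x) (hb : 8 ≤ edgeTriangleDeg G b x)
    (hpa : G.Adj p a) (hpz : G.Adj p z) (hqb : G.Adj q b) (hqz : G.Adj q z)
    (hpx : p ≠ x) (hqx : q ≠ x) (hpb : p ≠ b) (hqa : q ≠ a) : p = q := by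
  by_contra hpq
  have hL : [a, z, b, x, p, q].Nodup := by
    have := hax.ne; have := hbx.ne; have := haz.ne; have := hbz.ne
    have := hpa.ne; have := hpz.ne; have := hqb.ne; have := hqz.ne
    simp only [List.nodup_cons, List.mem_cons, List.not_mem_nil]
    grind
  obtain ⟨a', ⟨haa', hxa'⟩, hL'⟩ := List.exists_mem_nodup_cons hL (ha.trans_lt' (by simp))
  obtain ⟨b', ⟨hbb', hxb'⟩, hL''⟩ := List.exists_mem_nodup_cons hL' (hb.trans_lt' (by simp))
  refine hF (contains_C4expansion ![a, z, b, x] ![p, q, b', a'] ?_ ?_ ?_)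
  · change ([a, z, b, x, p, q] ++ [b', a']).Nodup
    exact List.perm_append_comm.nodup_iff.2 hL''
  · intro i; fin_cases i
    exacts [haz, hbz.symm, hbx, hax.symm]
  · intro i; fin_cases i
    exacts [⟨hpa.symm, hpz.symm⟩, ⟨hqz.symm, hqb.symm⟩, ⟨hbb', hxb'⟩, ⟨hxa', haa'⟩]

lemma forall_eq_or_forall_eq {ι β γ : Type*} {S : Set ι} {f : ι → β} {g : ι → γ}
    (h : ∀ i ∈ S, ∀ j ∈ S, f i = f j ∨ g i = g j) :
    (∀ i ∈ S, ∀ j ∈ S, f i = f j) ∨ (∀ i ∈ S, ∀ j ∈ S, g i = g j) := by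
  by_contra! ⟨⟨i, hi, j, hj, hfij⟩, ⟨k, hk, l, hl, hgkl⟩⟩
  have := h i hi j hj; have := h i hi k hk; have := h i hi l hl
  have := h j hj k hk; have := h j hj l hl; have := h k hk l hl
  grind

namespace Finset

section NoSingletonIntersections

variable {α : Type*} [DecidableEq α] {F : Finset (Finset α)} {T T' T₀ : Finset α}

lemma card_inter_eq_two_of_not_disjoint (h3 : (F : Set (Finset α)).Sized 3)
    (h1 : (F : Set (Finset α)).Pairwise fun T T' => #(T ∩ T') ≠ 1) (hT : T ∈ F) (hT₀ : T₀ ∈ F)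
    (hne : T ≠ T₀) (hmeet : ¬Disjoint T T₀) : #(T ∩ T₀) = 2 := by
  have hpos : 0 < #(T ∩ T₀) := card_pos.2 (not_disjoint_iff_nonempty_inter.1 hmeet)
  have hsub : ¬T ⊆ T₀ := fun h => hne (eq_of_subset_of_card_le h (by rw [h3 hT, h3 hT₀]))
  have hlt : #(T ∩ T₀) < #T :=
    card_lt_card ⟨inter_subset_left, fun h => hsub fun a ha => (mem_inter.1 (h ha)).2⟩
  have := h1 hT hT₀ hne
  have := h3 hT
  omega

lemma card_sdiff_eq_one_of_not_disjoint (h3 : (F : Set (Finset α)).Sized 3)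
    (h1 : (F : Set (Finset α)).Pairwise fun T T' => #(T ∩ T') ≠ 1) (hT : T ∈ F) (hT₀ : T₀ ∈ F)
    (hne : T ≠ T₀) (hmeet : ¬Disjoint T T₀) : #(T \ T₀) = 1 := by
  rw [card_sdiff, inter_comm, card_inter_eq_two_of_not_disjoint h3 h1 hT hT₀ hne hmeet, h3 hT]

lemma card_inter_eq_one_of_card_eq_two {P P' S : Finset α} (hS : #S = 3) (hP : P ⊆ S)
    (hP' : P' ⊆ S) (hPc : #P = 2) (hPc' : #P' = 2) (hne : P ≠ P') : #(P ∩ P') = 1 := by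
  have hle : #(P ∪ P') ≤ 3 := hS ▸ card_le_card (union_subset hP hP')
  have hgt : 2 < #(P ∪ P') := by
    by_contra! h
    have h₁ := eq_of_subset_of_card_le (subset_union_left (s₂ := P')) (hPc ▸ h)
    have h₂ := eq_of_subset_of_card_le (subset_union_right (s₁ := P)) (hPc' ▸ h)
    exact hne (h₁.trans h₂.symm)
  have := card_union_add_card_inter P P'
  omega

lemma inter_eq_or_sdiff_eq_of_not_disjoint (h3 : (F : Set (Finset α)).Sized 3)
    (h1 : (F : Set (Finset α)).Pairwise fun T T' => #(T ∩ T') ≠ 1) (hT : T ∈ F) (hT' : T' ∈ F)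
    (hT₀ : T₀ ∈ F) (hne : T ≠ T₀) (hne' : T' ≠ T₀) (hmeet : ¬Disjoint T T₀)
    (hmeet' : ¬Disjoint T' T₀) : T ∩ T₀ = T' ∩ T₀ ∨ T \ T₀ = T' \ T₀ := by
  by_contra! ⟨hP, hs⟩
  obtain ⟨s, hsT⟩ := card_eq_one.1 (card_sdiff_eq_one_of_not_disjoint h3 h1 hT hT₀ hne hmeet)
  obtain ⟨s', hsT'⟩ :=
    card_eq_one.1 (card_sdiff_eq_one_of_not_disjoint h3 h1 hT' hT₀ hne' hmeet')
  have hinter : T ∩ T' = (T ∩ T₀) ∩ (T' ∩ T₀) := by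
    ext w
    by_cases hw : w ∈ T₀
    · simp [hw]
    · simp only [mem_inter, hw, and_false, iff_false, not_and]
      intro hwT hwT'
      have hws : w = s := mem_singleton.1 (hsT ▸ mem_sdiff.2 ⟨hwT, hw⟩)
      have hws' : w = s' := mem_singleton.1 (hsT' ▸ mem_sdiff.2 ⟨hwT', hw⟩)
      exact hs (by rw [hsT, hsT', ← hws, ← hws'])
  refine h1 hT hT' (by rintro rfl; exact hP rfl) ?_
  rw [hinter]
  exact card_inter_eq_one_of_card_eq_two (h3 hT₀) inter_subset_right inter_subset_right
    (card_inter_eq_two_of_not_disjoint h3 h1 hT hT₀ hne hmeet)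
    (card_inter_eq_two_of_not_disjoint h3 h1 hT' hT₀ hne' hmeet') hP

lemma eq_of_inter_eq_of_sdiff_eq (hi : T ∩ T₀ = T' ∩ T₀) (hs : T \ T₀ = T' \ T₀) : T = T' := by
  rw [← sdiff_union_inter T T₀, ← sdiff_union_inter T' T₀, hi, hs]

lemma card_filter_not_disjoint_le_card_biUnion (h3 : (F : Set (Finset α)).Sized 3)
    (h1 : (F : Set (Finset α)).Pairwise fun T T' => #(T ∩ T') ≠ 1) (hT₀ : T₀ ∈ F) :
    #(F.filter (¬Disjoint · T₀)) ≤ #((F.filter (¬Disjoint · T₀)).biUnion id) := by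
  set C := F.filter (¬Disjoint · T₀)
  set U := C.biUnion id
  have hT₀C : T₀ ∈ C := mem_filter.2 ⟨hT₀, not_disjoint_iff_nonempty_inter.2 <| by
    rw [inter_self, ← card_pos, h3 hT₀]; norm_num⟩
  have hC' : ∀ T ∈ C.erase T₀, T ∈ F ∧ T ≠ T₀ ∧ ¬Disjoint T T₀ := fun T hT =>
    ⟨(mem_filter.1 (mem_of_mem_erase hT)).1, ne_of_mem_erase hT,
      (mem_filter.1 (mem_of_mem_erase hT)).2⟩
  have hsdiffU : ∀ T ∈ C.erase T₀, T \ T₀ ⊆ U \ T₀ := fun T hT =>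
    sdiff_subset_sdiff (subset_biUnion_of_mem id (mem_of_mem_erase hT)) le_rfl
  have hU : #U = #(U \ T₀) + 3 := by
    rw [← card_sdiff_add_card_eq_card (s := T₀) (t := U) (subset_biUnion_of_mem id hT₀C),
      h3 hT₀]
  have hC : #C = #(C.erase T₀) + 1 := (card_erase_add_one hT₀C).symm
  rcases forall_eq_or_forall_eq (S := ↑(C.erase T₀)) (f := (· ∩ T₀)) (g := (· \ T₀))
    fun T hT T' hT' => inter_eq_or_sdiff_eq_of_not_disjoint h3 h1 (hC' T hT).1 (hC' T' hT').1
      hT₀ (hC' T hT).2.1 (hC' T' hT').2.1 (hC' T hT).2.2 (hC' T' hT').2.2 with hsame | hsame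
  · -- a sunflower with a two-point kernel in `T₀`: the petals outside `T₀` are distinct
    have := card_le_card_of_injOn (t := (U \ T₀).powersetCard 1) (· \ T₀)
      (fun T hT => mem_powersetCard.2 ⟨hsdiffU T hT,
        card_sdiff_eq_one_of_not_disjoint h3 h1 (hC' T hT).1 hT₀ (hC' T hT).2.1 (hC' T hT).2.2⟩)
      (fun T hT T' hT' h => eq_of_inter_eq_of_sdiff_eq (hsame T hT T' hT') h)
    rw [card_powersetCard, Nat.choose_one_right] at this
    omega
  · -- all members lie in `T₀` plus one common outside point
    have := card_le_card_of_injOn (t := T₀.powersetCard 2) (· ∩ T₀)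
      (fun T hT => mem_powersetCard.2 ⟨inter_subset_right,
        card_inter_eq_two_of_not_disjoint h3 h1 (hC' T hT).1 hT₀ (hC' T hT).2.1 (hC' T hT).2.2⟩)
      (fun T hT T' hT' h => eq_of_inter_eq_of_sdiff_eq h (hsame T hT T' hT'))
    rw [card_powersetCard, h3 hT₀, show Nat.choose 3 2 = 3 from rfl] at this
    rcases (C.erase T₀).eq_empty_or_nonempty with hC'e | ⟨T, hT⟩
    · rw [hC'e, card_empty] at hC
      omega
    · have := card_le_card (hsdiffU T hT)
      rw [card_sdiff_eq_one_of_not_disjoint h3 h1 (hC' T hT).1 hT₀ (hC' T hT).2.1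
        (hC' T hT).2.2] at this
      omega

lemma disjoint_of_disjoint_of_not_disjoint (h3 : (F : Set (Finset α)).Sized 3)
    (h1 : (F : Set (Finset α)).Pairwise fun T T' => #(T ∩ T') ≠ 1) (hT : T ∈ F) (hT' : T' ∈ F)
    (hT₀ : T₀ ∈ F) (hdisj : Disjoint T T₀) (hmeet : ¬Disjoint T' T₀) : Disjoint T T' := by
  rcases eq_or_ne T' T₀ with rfl | hne
  · exact hdisj
  by_contra hTT'
  have hsub : T ∩ T' ⊆ T' \ T₀ := fun w hw =>
    mem_sdiff.2 ⟨(mem_inter.1 hw).2, disjoint_left.1 hdisj (mem_inter.1 hw).1⟩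
  have hle := card_le_card hsub
  rw [card_sdiff_eq_one_of_not_disjoint h3 h1 hT' hT₀ hne hmeet] at hle
  have hpos := card_pos.2 (not_disjoint_iff_nonempty_inter.1 hTT')
  exact h1 hT hT' (by rintro rfl; exact hmeet hdisj) (by omega)

end NoSingletonIntersections

theorem card_le_card_biUnion_of_card_inter_ne_one {α : Type*} [DecidableEq α]
    (F : Finset (Finset α)) (h3 : (F : Set (Finset α)).Sized 3)
    (h1 : (F : Set (Finset α)).Pairwise fun T T' => #(T ∩ T') ≠ 1) : #F ≤ #(F.biUnion id) := by
  induction F using strongInduction with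
  | _ F ih =>
  rcases F.eq_empty_or_nonempty with rfl | ⟨T₀, hT₀⟩
  · simp
  set C := F.filter (¬Disjoint · T₀)
  set R := F.filter (Disjoint · T₀)
  have hR : R ⊂ F := filter_ssubset.2 ⟨T₀, hT₀, by
    rw [disjoint_self, bot_eq_empty, ← ne_eq, ← nonempty_iff_ne_empty, ← card_pos, h3 hT₀]
    norm_num⟩
  have hRcard := ih R hR (h3.mono (coe_subset.2 (filter_subset _ F)))
    (h1.mono (coe_subset.2 (filter_subset _ F)))
  have hdisj : Disjoint (C.biUnion id) (R.biUnion id) := by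
    simp only [disjoint_biUnion_left, disjoint_biUnion_right, id]
    intro T hT T' hT'
    exact (disjoint_of_disjoint_of_not_disjoint h3 h1 (mem_filter.1 hT).1 (mem_filter.1 hT').1
      hT₀ (mem_filter.1 hT).2 (mem_filter.1 hT').2).symm
  calc #F = #R + #C := (card_filter_add_card_filter_not (Disjoint · T₀)).symm
    _ ≤ #(R.biUnion id) + #(C.biUnion id) :=
      add_le_add hRcard (card_filter_not_disjoint_le_card_biUnion h3 h1 hT₀)
    _ = #(F.biUnion id) := by
      rw [← card_union_of_disjoint hdisj.symm, ← union_biUnion, filter_union_filter_not_eq]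

end Finset

section CrossEdges

variable {V : Type*} {G : SimpleGraph V}

lemma crossEdges_comm (G : SimpleGraph V) (A B : Set V) :
    crossEdges G A B = crossEdges G B A := by
  rw [crossEdges, crossEdges, ← Set.ncard_image_of_injective _ Prod.swap_injective]
  congr 1
  ext ⟨a, b⟩
  simp [G.adj_comm, and_left_comm]

variable [Finite V]

lemma crossEdges_mono {A A' B B' : Set V} (hA : A ⊆ A') (hB : B ⊆ B') :
    crossEdges G A B ≤ crossEdges G A' B' :=
  Set.ncard_le_ncard fun _ hp => ⟨hA hp.1, hB hp.2.1, hp.2.2⟩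

lemma crossEdges_insert_left {v : V} {A : Set V} (hv : v ∉ A) (B : Set V) :
    crossEdges G (insert v A) B = crossEdges G A B + (G.neighborSet v ∩ B).ncard := by
  have h : {p : V × V | p.1 ∈ insert v A ∧ p.2 ∈ B ∧ G.Adj p.1 p.2} =
      {p | p.1 ∈ A ∧ p.2 ∈ B ∧ G.Adj p.1 p.2} ∪ Prod.mk v '' (G.neighborSet v ∩ B) := by
    ext ⟨a, b⟩
    simp only [Set.mem_insert_iff, Set.mem_ofPred_eq, Set.mem_union, Set.mem_image,
      Set.mem_inter_iff, mem_neighborSet, Prod.mk.injEq]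
    grind
  rw [crossEdges, h, Set.ncard_union_eq, Set.ncard_image_of_injective _ (Prod.mk_right_injective v),
    crossEdges]
  rw [Set.disjoint_left]
  rintro _ ⟨ha, -⟩ ⟨b, -, rfl⟩
  exact hv ha

lemma crossEdges_add_crossEdges_compl {A B : Set V} (h : Disjoint A B) :
    crossEdges G A B + crossEdges Gᶜ A B = A.ncard * B.ncard := by
  rw [← Set.ncard_prod, crossEdges, crossEdges, ← Set.ncard_union_eq]
  · congr 1
    ext ⟨a, b⟩
    simp only [Set.mem_union, Set.mem_ofPred_eq, compl_adj, Set.mem_prod]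
    have : a ∈ A → b ∈ B → a ≠ b := fun ha hb hab => Set.disjoint_left.1 h ha (hab ▸ hb)
    tauto
  · rw [Set.disjoint_left]
    rintro _ ⟨-, -, h⟩ ⟨-, -, -, h'⟩
    exact h' h

lemma crossEdges_compl_le_and_card_le {x : V} {V₁ V₂ : Set V} (hdisj : Disjoint V₁ V₂)
    (hunion : V₁ ∪ V₂ = {x}ᶜ) {δ : ℝ}
    (hcross : (Nat.card V : ℝ) ^ 2 / 4 - 2 * δ * Nat.card V ^ 2 ≤ crossEdges G V₁ V₂) :
    (crossEdges Gᶜ V₁ V₂ : ℝ) ≤ 2 * δ * Nat.card V ^ 2 ∧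
      (Nat.card V : ℝ) ≤ 8 * δ * Nat.card V ^ 2 := by
  have hsum : V₁.ncard + V₂.ncard + 1 = Nat.card V := by
    rw [← Set.ncard_union_eq hdisj, hunion, ← Set.ncard_singleton x, add_comm,
      Set.ncard_add_ncard_compl]
  have hsumR : (V₁.ncard : ℝ) + V₂.ncard + 1 = Nat.card V := by exact_mod_cast hsum
  have hprod : (crossEdges G V₁ V₂ : ℝ) + crossEdges Gᶜ V₁ V₂ = V₁.ncard * V₂.ncard := by
    exact_mod_cast crossEdges_add_crossEdges_compl hdisj
  have hnon := (crossEdges Gᶜ V₁ V₂).cast_nonneg (α := ℝ)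
  have hamgm := sq_nonneg ((V₁.ncard : ℝ) - V₂.ncard)
  constructor <;> nlinarith [(V₁.ncard).cast_nonneg (α := ℝ), (V₂.ncard).cast_nonneg (α := ℝ)]

end CrossEdges

def IsMaxCut {V : Type*} (G : SimpleGraph V) (X P Q : Set V) : Prop :=
  Disjoint P Q ∧ P ∪ Q = X ∧
    ∀ W₁ W₂ : Set V, Disjoint W₁ W₂ → W₁ ∪ W₂ = X → crossEdges G W₁ W₂ ≤ crossEdges G P Q

namespace IsMaxCut

variable {V : Type*} {G : SimpleGraph V} {X P Q : Set V}

lemma symm (h : IsMaxCut G X P Q) : IsMaxCut G X Q P :=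
  ⟨h.1.symm, Set.union_comm P Q ▸ h.2.1,
    fun W₁ W₂ hW hU => crossEdges_comm G P Q ▸ h.2.2 W₁ W₂ hW hU⟩

lemma ncard_neighborSet_inter_le [Finite V] (h : IsMaxCut G X P Q) {v : V} (hv : v ∈ P) :
    (G.neighborSet v ∩ P).ncard ≤ (G.neighborSet v ∩ Q).ncard := by
  have hvQ : v ∉ Q := Set.disjoint_left.1 h.1 hv
  have hmove := h.2.2 (P \ {v}) (insert v Q)
    (Set.disjoint_left.2 fun w hw hw' => hw'.elim hw.2 (Set.disjoint_left.1 h.1 hw.1))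
    (by rw [← h.2.1, Set.union_insert, ← Set.insert_union, Set.insert_sdiff_singleton,
      Set.insert_eq_of_mem hv])
  rw [crossEdges_comm G (P \ {v}), crossEdges_insert_left hvQ, crossEdges_comm] at hmove
  have hP : crossEdges G P Q = crossEdges G (P \ {v}) Q + (G.neighborSet v ∩ Q).ncard := by
    rw [← crossEdges_insert_left (fun h => h.2 rfl), Set.insert_sdiff_singleton,
      Set.insert_eq_of_mem hv]
  have hN : G.neighborSet v ∩ (P \ {v}) = G.neighborSet v ∩ P := by
    ext w
    simp only [Set.mem_inter_iff, mem_neighborSet, Set.mem_sdiff, Set.mem_singleton_iff,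
      and_congr_right_iff, and_iff_left_iff_imp]
    exact fun hvw _ => hvw.ne'
  rw [hN, hP] at hmove
  omega

end IsMaxCut

section HighCodegree

variable {V : Type*} {G : SimpleGraph V} {x : V} {D : Set V}

theorem crossEdges_le_of_subset_neighborSet [Finite V] (hF : _root_.Free C4expansion G)
    (hD : ∀ a ∈ D, G.Adj a x ∧ 8 ≤ edgeTriangleDeg G a x) {v : V} (hvx : v ≠ x) {A C : Set V}
    (hA : A ⊆ G.neighborSet v ∩ D) (hC : C ⊆ G.neighborSet v ∩ D) (hAC : Disjoint A C) :
    crossEdges G A C ≤ A.ncard + C.ncard := by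
  set E := {p : V × V | p.1 ∈ A ∧ p.2 ∈ C ∧ G.Adj p.1 p.2}
  have hshare : ∀ e ∈ E, ∀ e' ∈ E, e.1 = e'.1 ∨ e.2 = e'.2 := by
    rintro ⟨a, c⟩ ⟨ha, hc, hac⟩ ⟨a', c'⟩ ⟨ha', hc', hac'⟩
    refine or_iff_not_imp_left.2 fun hne => ?_
    exact apex_eq_of_free_C4expansion hF hvx.symm hne (hD a (hA ha).2).1 (hD a' (hA ha').2).1
      (hA ha).1.symm (hA ha').1.symm (hD a (hA ha).2).2 (hD a' (hA ha').2).2 hac.symm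
      (hC hc).1.symm hac'.symm (hC hc').1.symm (hD c (hC hc).2).1.ne (hD c' (hC hc').2).1.ne
      (fun h => Set.disjoint_left.1 hAC ha' (h ▸ hc))
      (fun h => Set.disjoint_left.1 hAC ha (h ▸ hc'))
  rcases forall_eq_or_forall_eq hshare with h | h
  · exact (Set.ncard_le_ncard_of_injOn Prod.snd (fun e he => he.2.1)
      fun e he e' he' h' => Prod.ext (h e he e' he') h').trans (Nat.le_add_left _ _)
  · exact (Set.ncard_le_ncard_of_injOn Prod.fst (fun e he => he.1)
      fun e he e' he' h' => Prod.ext h' (h e he e' he')).trans (Nat.le_add_right _ _)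

theorem ncard_neighborSet_inter_inter_le [Finite V] (hF : _root_.Free C4expansion G)
    (hD : ∀ a ∈ D, G.Adj a x ∧ 8 ≤ edgeTriangleDeg G a x) {P Q : Set V}
    (hcut : IsMaxCut G {x}ᶜ P Q) {v : V} (hv : v ∈ P) {δ n : ℝ} (hδ : 0 < δ)
    (hδ₀ : δ ≤ 1 / 10000) (hV : (Nat.card V : ℝ) ≤ n) (hn : n ≤ 8 * δ * n ^ 2)
    (hDbar : (({x}ᶜ \ D).ncard : ℝ) ≤ 8 * δ * n)
    (hnon : (crossEdges Gᶜ P Q : ℝ) ≤ 2 * δ * n ^ 2) :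
    ((G.neighborSet v ∩ P ∩ D).ncard : ℝ) ≤ 11 * √δ * n := by
  set A := G.neighborSet v ∩ P ∩ D
  set C := G.neighborSet v ∩ Q ∩ D
  have hvx : v ≠ x := (hcut.2.1 ▸ Set.mem_union_left Q hv : v ∈ ({x}ᶜ : Set V))
  have hAC : Disjoint A C := hcut.1.mono (fun w hw => hw.1.2) (fun w hw => hw.1.2)
  have hside : A.ncard ≤ C.ncard + ({x}ᶜ \ D).ncard := calc
    A.ncard ≤ (G.neighborSet v ∩ P).ncard := Set.ncard_le_ncard Set.inter_subset_left
    _ ≤ (G.neighborSet v ∩ Q).ncard := hcut.ncard_neighborSet_inter_le hv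
    _ ≤ (C ∪ {x}ᶜ \ D).ncard := Set.ncard_le_ncard fun w hw => by
      by_cases hwD : w ∈ D
      exacts [Or.inl ⟨hw, hwD⟩, Or.inr ⟨hcut.2.1 ▸ Or.inr hw.2, hwD⟩]
    _ ≤ C.ncard + ({x}ᶜ \ D).ncard := Set.ncard_union_le _ _
  have hedges := crossEdges_le_of_subset_neighborSet hF hD hvx (fun w hw => ⟨hw.1.1, hw.2⟩)
    (fun w hw => ⟨hw.1.1, hw.2⟩) hAC
  have hnonAC : crossEdges Gᶜ A C ≤ crossEdges Gᶜ P Q :=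
    crossEdges_mono (fun w hw => hw.1.2) (fun w hw => hw.1.2)
  have hAn : (A.ncard : ℝ) ≤ n := (Nat.cast_le.2 (Set.ncard_le_card A)).trans hV
  have hCn : (C.ncard : ℝ) ≤ n := (Nat.cast_le.2 (Set.ncard_le_card C)).trans hV
  have hprod : (A.ncard : ℝ) * C.ncard ≤ 2 * n + 2 * δ * n ^ 2 := by
    have h1 : (crossEdges G A C : ℝ) ≤ A.ncard + C.ncard := by exact_mod_cast hedges
    have h2 : (crossEdges Gᶜ A C : ℝ) ≤ crossEdges Gᶜ P Q := by exact_mod_cast hnonAC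
    have h3 : (crossEdges G A C : ℝ) + crossEdges Gᶜ A C = A.ncard * C.ncard := by
      exact_mod_cast crossEdges_add_crossEdges_compl hAC
    linarith
  have hsideR : (A.ncard : ℝ) ≤ C.ncard + ({x}ᶜ \ D).ncard := by exact_mod_cast hside
  have hs : √δ ^ 2 = δ := Real.sq_sqrt hδ.le
  have hs0 : 0 < √δ := Real.sqrt_pos.2 hδ
  have hs1 : √δ ≤ 1 / 100 := by
    rw [show (1 : ℝ) / 100 = √((1 / 100) ^ 2) by rw [Real.sqrt_sq (by norm_num)]]
    exact Real.sqrt_le_sqrt (by linarith)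
  by_contra! hbig
  have hn0 : 0 < n := by nlinarith
  have hC : 10 * √δ * n ≤ C.ncard := by nlinarith
  have hAC' : 110 * δ * n ^ 2 ≤ A.ncard * C.ncard := calc
    110 * δ * n ^ 2 = (11 * √δ * n) * (10 * √δ * n) := by linear_combination (-110 * n ^ 2) * hs
    _ ≤ A.ncard * C.ncard := mul_le_mul hbig.le hC (by positivity) (by positivity)
  have := mul_pos hδ (pow_pos hn0 2)
  linarith

theorem card_inter_ne_one_of_isNClique [DecidableEq V] (hF : _root_.Free C4expansion G)
    (hD : ∀ a ∈ D, G.Adj a x ∧ 8 ≤ edgeTriangleDeg G a x) {T T' : Finset V}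
    (hT : G.IsNClique 3 T) (hT' : G.IsNClique 3 T') (hxT : x ∉ T) (hxT' : x ∉ T')
    (hTD : 1 < ((T : Set V) ∩ D).ncard) (hT'D : 1 < ((T' : Set V) ∩ D).ncard) :
    (T ∩ T').card ≠ 1 := by
  intro h
  obtain ⟨u, hu⟩ := Finset.card_eq_one.1 h
  have honly : ∀ w ∈ T, w ∈ T' → w = u := fun w hw hw' =>
    Finset.mem_singleton.1 (hu ▸ Finset.mem_inter.2 ⟨hw, hw'⟩)
  have huT : u ∈ T := (Finset.mem_inter.1 (hu ▸ Finset.mem_singleton_self u)).1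
  have huT' : u ∈ T' := (Finset.mem_inter.1 (hu ▸ Finset.mem_singleton_self u)).2
  obtain ⟨a, ⟨haT, haD⟩, hau⟩ := Set.exists_ne_of_one_lt_ncard hTD u
  obtain ⟨b, ⟨hbT', hbD⟩, hbu⟩ := Set.exists_ne_of_one_lt_ncard hT'D u
  obtain ⟨p, hpT, hp⟩ := Finset.exists_mem_notMem_of_card_lt_card (s := {u, a}) (t := T)
    (Finset.card_le_two.trans_lt (by rw [hT.card_eq]; norm_num))
  obtain ⟨q, hqT', hq⟩ := Finset.exists_mem_notMem_of_card_lt_card (s := {u, b}) (t := T')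
    (Finset.card_le_two.trans_lt (by rw [hT'.card_eq]; norm_num))
  simp only [Finset.mem_insert, Finset.mem_singleton, not_or] at hp hq
  have hpq := apex_eq_of_free_C4expansion hF (x := x) (a := a) (z := u) (b := b)
    (fun h => hxT (h ▸ huT)) (fun h => hau (honly a haT (h ▸ hbT'))) (hD a haD).1 (hD b hbD).1
    (hT.1 haT huT hau) (hT'.1 hbT' huT' hbu) (hD a haD).2 (hD b hbD).2
    (hT.1 hpT haT hp.2) (hT.1 hpT huT hp.1) (hT'.1 hqT' hbT' hq.2) (hT'.1 hqT' huT' hq.1)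
    (fun h => hxT (h ▸ hpT)) (fun h => hxT' (h ▸ hqT')) (fun h => hp.1 (honly p hpT (h ▸ hbT')))
    (fun h => hq.1 (honly q (h ▸ haT) hqT'))
  exact hp.1 (honly p hpT (hpq ▸ hqT'))

theorem ncard_isNClique_le [Fintype V] [DecidableEq V] (hF : _root_.Free C4expansion G)
    (hD : ∀ a ∈ D, G.Adj a x ∧ 8 ≤ edgeTriangleDeg G a x) :
    {T : Finset V | G.IsNClique 3 T ∧ x ∉ T ∧ 1 < ((T : Set V) ∩ D).ncard}.ncard
      < Nat.card V := by
  set 𝒯 := {T : Finset V | G.IsNClique 3 T ∧ x ∉ T ∧ 1 < ((T : Set V) ∩ D).ncard}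
  have hfin : 𝒯.Finite := Set.toFinite _
  have hmem : ∀ T ∈ hfin.toFinset, T ∈ 𝒯 := fun T hT => hfin.mem_toFinset.1 hT
  rw [Set.ncard_eq_toFinset_card _ hfin]
  refine (Finset.card_le_card_biUnion_of_card_inter_ne_one _ (fun T hT => (hmem T hT).1.card_eq)
    fun T hT T' hT' _ => card_inter_ne_one_of_isNClique hF hD (hmem T hT).1 (hmem T' hT').1
      (hmem T hT).2.1 (hmem T' hT').2.1 (hmem T hT).2.2 (hmem T' hT').2.2).trans_lt ?_
  calc (hfin.toFinset.biUnion id).card ≤ (Finset.univ.erase x).card :=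
        Finset.card_le_card fun w hw => by
          obtain ⟨T, hT, hwT⟩ := Finset.mem_biUnion.1 hw
          exact Finset.mem_erase.2 ⟨fun h => (hmem T hT).2.1 (h ▸ hwT), Finset.mem_univ w⟩
    _ < Nat.card V := by
        rw [Nat.card_eq_fintype_card, ← Finset.card_univ]
        exact Finset.card_erase_lt_of_mem (Finset.mem_univ x)

end HighCodegree

section BadTriangles

variable {V : Type*} [DecidableEq V] {G : SimpleGraph V} {x : V} {D Dbar : Set V}

theorem ncard_add_ncard_lt [Fintype V] (hF : _root_.Free C4expansion G)
    (hD : ∀ a ∈ D, G.Adj a x ∧ 8 ≤ edgeTriangleDeg G a x) (hxD : x ∉ D) (hDbar : Dbar = {x}ᶜ \ D)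
    {ℬ₁ ℬ_D : Set (Finset V)}
    (hℬ₁ : ∀ T ∈ ℬ₁, G.IsNClique 3 T ∧ x ∉ T ∧ ((T : Set V) ∩ Dbar).ncard = 1)
    (hℬ_D : ∀ T ∈ ℬ_D, G.IsNClique 3 T ∧ (T : Set V) ⊆ D) :
    ℬ₁.ncard + ℬ_D.ncard < Nat.card V := by
  have hdisj : Disjoint ℬ₁ ℬ_D := Set.disjoint_left.2 fun T h₁ h_D => by
    obtain ⟨w, hw⟩ := Set.nonempty_of_ncard_ne_zero (by rw [(hℬ₁ T h₁).2.2]; norm_num)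
    exact (hDbar ▸ hw.2 : w ∈ {x}ᶜ \ D).2 ((hℬ_D T h_D).2 hw.1)
  have hsub : ℬ₁ ∪ ℬ_D ⊆
      {T : Finset V | G.IsNClique 3 T ∧ x ∉ T ∧ 1 < ((T : Set V) ∩ D).ncard} := by
    rintro T (hT | hT)
    · obtain ⟨hT, hxT, h1⟩ := hℬ₁ T hT
      refine ⟨hT, hxT, ?_⟩
      have hcover : (T : Set V) ⊆ ((T : Set V) ∩ D) ∪ ((T : Set V) ∩ Dbar) := fun w hw => by
        by_cases hwD : w ∈ D
        · exact Or.inl ⟨hw, hwD⟩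
        · refine Or.inr ⟨hw, ?_⟩
          rw [hDbar]
          exact ⟨fun h => hxT (Finset.mem_coe.1 (h ▸ hw)), hwD⟩
      have := (Set.ncard_le_ncard hcover).trans (Set.ncard_union_le _ _)
      rw [Set.ncard_coe_finset, hT.card_eq] at this
      omega
    · obtain ⟨hT, hTD⟩ := hℬ_D T hT
      refine ⟨hT, fun h => hxD (hTD h), ?_⟩
      rw [Set.inter_eq_left.2 hTD, Set.ncard_coe_finset, hT.card_eq]
      norm_num
  rw [← Set.ncard_union_eq hdisj]
  exact (Set.ncard_le_ncard hsub).trans_lt (ncard_isNClique_le hF hD)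

variable {V₁ V₂ : Set V} {S : SimpleGraph V}

lemma exists_eq_triple_of_not_isNClique (hunion : V₁ ∪ V₂ = {x}ᶜ) (hDbar : Dbar = {x}ᶜ \ D)
    (hS : S = fromRel fun u v => u = x ∨ (u ∈ V₁ ∧ v ∈ V₂)) {T : Finset V}
    (hT : G.IsNClique 3 T) (hTS : ¬ S.IsNClique 3 T) (hTD : ((T : Set V) ∩ Dbar).ncard = 1)
    (hxT : x ∈ T) :
    ∃ v ∈ Dbar, ∃ a ∈ G.neighborSet v ∩ D,
      (v ∈ V₁ → a ∈ V₁) ∧ (v ∈ V₂ → a ∈ V₂) ∧ T = {x, v, a} := by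
  obtain ⟨v, hv⟩ := Set.ncard_eq_one.1 hTD
  have hvTD : v ∈ (T : Set V) ∩ Dbar := by rw [hv]; rfl
  have hvx : v ≠ x := (hDbar ▸ hvTD.2 : v ∈ {x}ᶜ \ D).1
  obtain ⟨a, haT, ha⟩ := Finset.exists_mem_notMem_of_card_lt_card (s := {x, v}) (t := T)
    (Finset.card_le_two.trans_lt (by rw [hT.card_eq]; norm_num))
  simp only [Finset.mem_insert, Finset.mem_singleton, not_or] at ha
  have haD : a ∈ D := by
    by_contra haD
    have : a ∈ (T : Set V) ∩ Dbar := ⟨haT, hDbar ▸ ⟨ha.1, haD⟩⟩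
    rw [hv] at this
    exact ha.2 this
  obtain rfl : T = {x, v, a} := (Finset.eq_of_subset_of_card_le
    (by simp [Finset.insert_subset_iff, hxT, Finset.mem_coe.1 hvTD.1, haT])
    (by rw [hT.card_eq, Finset.card_eq_three.2 ⟨x, v, a, hvx.symm, Ne.symm ha.1,
      Ne.symm ha.2, rfl⟩])).symm
  have hcross : ¬ ((v ∈ V₁ ∧ a ∈ V₂) ∨ (a ∈ V₁ ∧ v ∈ V₂)) := fun h => hTS <| by
    rw [is3Clique_triple_iff, hS]
    simp only [fromRel_adj]
    exact ⟨⟨hvx.symm, by simp⟩, ⟨Ne.symm ha.1, by simp⟩, ⟨Ne.symm ha.2, by tauto⟩⟩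
  have ha12 : a ∈ V₁ ∪ V₂ := hunion ▸ ha.1
  refine ⟨v, hvTD.2, a, ⟨hT.1 (by simp) (by simp) (Ne.symm ha.2), haD⟩, ?_, ?_, rfl⟩ <;>
    intro hv <;> rcases ha12 with ha | ha <;> tauto

theorem ncard_le_mul_ncard [Finite V] (hunion : V₁ ∪ V₂ = {x}ᶜ) (hDbar : Dbar = {x}ᶜ \ D)
    (hS : S = fromRel fun u v => u = x ∨ (u ∈ V₁ ∧ v ∈ V₂)) {M : ℝ}
    (hM : ∀ v ∈ Dbar, ∀ P, (P = V₁ ∨ P = V₂) → v ∈ P → ((G.neighborSet v ∩ P ∩ D).ncard : ℝ) ≤ M)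
    {ℬ : Set (Finset V)} (hℬ : ∀ T ∈ ℬ, (G.IsNClique 3 T ∧ ¬ S.IsNClique 3 T) ∧
      ((T : Set V) ∩ Dbar).ncard = 1 ∧ x ∈ T) :
    (ℬ.ncard : ℝ) ≤ M * Dbar.ncard := by
  have hside : ∀ v ∈ Dbar, ∃ P, (P = V₁ ∨ P = V₂) ∧ v ∈ P := fun v hv =>
    (hunion ▸ (hDbar ▸ hv : v ∈ {x}ᶜ \ D).1 : v ∈ V₁ ∪ V₂).elim
      (fun h => ⟨V₁, Or.inl rfl, h⟩) (fun h => ⟨V₂, Or.inr rfl, h⟩)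
  choose! P hP using hside
  set I := Dbar.toFinite.toFinset
  have hsub : ℬ ⊆ ⋃ v ∈ I, (fun a => ({x, v, a} : Finset V)) '' (G.neighborSet v ∩ P v ∩ D) :=
    fun T hT => by
      obtain ⟨⟨hT, hTS⟩, hTD, hxT⟩ := hℬ T hT
      obtain ⟨v, hv, a, ⟨hva, haD⟩, h₁, h₂, rfl⟩ :=
        exists_eq_triple_of_not_isNClique hunion hDbar hS hT hTS hTD hxT
      refine Set.mem_biUnion (Dbar.toFinite.mem_toFinset.2 hv) ⟨a, ⟨⟨hva, ?_⟩, haD⟩, rfl⟩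
      obtain ⟨h | h, hvP⟩ := hP v hv <;> rw [h] at hvP ⊢
      exacts [h₁ hvP, h₂ hvP]
  have hcard := (Set.ncard_le_ncard hsub).trans (I.set_ncard_biUnion_le _)
  calc (ℬ.ncard : ℝ)
      ≤ ∑ v ∈ I, (((fun a => ({x, v, a} : Finset V)) '' (G.neighborSet v ∩ P v ∩ D)).ncard : ℝ) :=
        mod_cast hcard
    _ ≤ ∑ v ∈ I, M := Finset.sum_le_sum fun v hv => by
        rw [Set.Finite.mem_toFinset] at hv
        exact (Nat.cast_le.2 Set.ncard_image_le).trans (hM v hv _ (hP v hv).1 (hP v hv).2)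
    _ = M * Dbar.ncard := by
        rw [Finset.sum_const, nsmul_eq_mul, Set.ncard_eq_toFinset_card _ Dbar.toFinite, mul_comm]

end BadTriangles

/-- There exist `δ₀ > 0` and `n₀` such that for all `0 < δ ≤ δ₀` and `n ≥ n₀`,
under the Setup and the triangle-set definitions with `|D̄| ≤ 8δn`,
`|ℬ₁| + |ℬ[D]| ≤ 11√δ·n·|D̄| + n - 1`. -/
theorem stmt17 : ∃ δ0 : ℝ, 0 < δ0 ∧ ∃ n0 : ℕ,
    ∀ δ : ℝ, 0 < δ → δ ≤ δ0 → ∀ n : ℕ, n0 ≤ n →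
    ∀ G : SimpleGraph (Fin n), _root_.Free C4expansion G →
    (∀ u v : Fin n, G.Adj u v → ∃ w : Fin n, G.Adj u w ∧ G.Adj v w) →
    ∀ (x : Fin n) (V1 V2 : Set (Fin n)),
    Disjoint V1 V2 → V1 ∪ V2 = {x}ᶜ →
    (∀ W1 W2 : Set (Fin n), Disjoint W1 W2 → W1 ∪ W2 = {x}ᶜ →
      crossEdges G W1 W2 ≤ crossEdges G V1 V2) →
    ((n : ℝ) ^ 2 / 4 - 2 * δ * (n : ℝ) ^ 2 ≤ (crossEdges G V1 V2 : ℝ)) →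
    ∀ D : Set (Fin n),
    D = {v : Fin n | v ≠ x ∧ G.Adj v x ∧
      (n : ℝ) / 200 ≤ (edgeTriangleDeg G v x : ℝ)} →
    ∀ Dbar : Set (Fin n), Dbar = ({x}ᶜ : Set (Fin n)) \ D →
    ((Dbar.ncard : ℝ) ≤ 8 * δ * (n : ℝ)) →
    ∀ S : SimpleGraph (Fin n),
    S = SimpleGraph.fromRel (fun u v => u = x ∨ (u ∈ V1 ∧ v ∈ V2)) →
    ∀ calB1 : Set (Finset (Fin n)),
    calB1 = {s : Finset (Fin n) |
      (G.IsNClique 3 s ∧ ¬ S.IsNClique 3 s) ∧ ((s : Set (Fin n)) ∩ Dbar).ncard = 1} →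
    ∀ calBD : Set (Finset (Fin n)),
    calBD = {s : Finset (Fin n) |
      (G.IsNClique 3 s ∧ ¬ S.IsNClique 3 s) ∧ ((s : Set (Fin n)) ∩ Dbar).ncard = 0 ∧
        (s : Set (Fin n)) ⊆ D} →
    ((calB1.ncard : ℝ) + (calBD.ncard : ℝ)
        ≤ 11 * Real.sqrt δ * (n : ℝ) * (Dbar.ncard : ℝ) + (n : ℝ) - 1) := by
  refine ⟨1 / 10000, by norm_num, 1600, fun δ hδ hδ₀ n hn G hF _ x V1 V2 hdisj hunion hmax hcross
    D hDdef Dbar hDbar hDbarcard S hS calB1 hB1 calBD hBD => ?_⟩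
  obtain ⟨hnon, hδn⟩ := crossEdges_compl_le_and_card_le hdisj hunion (by rwa [Nat.card_fin])
  rw [Nat.card_fin] at hnon hδn
  have hD : ∀ a ∈ D, G.Adj a x ∧ 8 ≤ edgeTriangleDeg G a x := fun a ha => by
    rw [hDdef] at ha
    obtain ⟨-, hax, hdeg⟩ : a ≠ x ∧ G.Adj a x ∧ (n : ℝ) / 200 ≤ edgeTriangleDeg G a x := ha
    have hnR : (1600 : ℝ) ≤ n := by exact_mod_cast hn
    exact ⟨hax, by exact_mod_cast (by linarith : (8 : ℝ) ≤ edgeTriangleDeg G a x)⟩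
  have hcut : IsMaxCut G {x}ᶜ V1 V2 := ⟨hdisj, hunion, hmax⟩
  have hside : ∀ v ∈ Dbar, ∀ P, (P = V1 ∨ P = V2) → v ∈ P →
      ((G.neighborSet v ∩ P ∩ D).ncard : ℝ) ≤ 11 * √δ * n := by
    rintro v - P (rfl | rfl) hv
    exacts [ncard_neighborSet_inter_inter_le hF hD hcut hv hδ hδ₀ (by simp) hδn
      (hDbar ▸ hDbarcard) hnon, ncard_neighborSet_inter_inter_le hF hD hcut.symm hv hδ hδ₀
      (by simp) hδn (hDbar ▸ hDbarcard) (crossEdges_comm Gᶜ V1 _ ▸ hnon)]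
  have hthrough := ncard_le_mul_ncard hunion hDbar hS hside (ℬ := calB1 ∩ {T | x ∈ T})
    fun T ⟨hT, hxT⟩ => by rw [hB1] at hT; exact ⟨hT.1, hT.2, hxT⟩
  have havoid := ncard_add_ncard_lt hF hD (by rw [hDdef]; exact fun h => h.1 rfl) hDbar
    (ℬ₁ := calB1 \ {T | x ∈ T}) (ℬ_D := calBD)
    (fun T ⟨hT, hxT⟩ => by rw [hB1] at hT; exact ⟨hT.1.1, hxT, hT.2⟩)
    (fun T hT => by rw [hBD] at hT; exact ⟨hT.1.1, hT.2.2⟩)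
  rw [Nat.card_fin] at havoid
  have hsplit : ((calB1 ∩ {T | x ∈ T}).ncard : ℝ) + (calB1 \ {T | x ∈ T}).ncard = calB1.ncard := by
    exact_mod_cast Set.ncard_inter_add_ncard_sdiff_eq_ncard calB1 {T | x ∈ T}
  have havoidR : ((calB1 \ {T | x ∈ T}).ncard : ℝ) + calBD.ncard + 1 ≤ n := by
    exact_mod_cast havoid
  linarith
end

section
/- There exist δ0 > 0 and n0 ∈ ℕ such that the following holds for all 0 < δ ≤ δ0 and n ≥ n0. Assume the Setup. If u1v1 is an edge of G with u1, v1 ∈ D_1' and u2v2 is an edge of G with u2, v2 ∈ D_2', then no triangle of G consists of u1, v1 and one of u2, v2, and no triangle of G consists of u2, v2 and one of u1, v1. -/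
open SimpleGraph

set_option linter.unnecessarySeqFocus false in
lemma edge_cases (e : (SimpleGraph.cycleGraph 4).edgeSet) :
    (e : Sym2 (Fin 4)) = s(0,1) ∨ (e : Sym2 (Fin 4)) = s(1,2) ∨
    (e : Sym2 (Fin 4)) = s(2,3) ∨ (e : Sym2 (Fin 4)) = s(3,0) := by
  have h : ∀ f : Sym2 (Fin 4), f ∈ (SimpleGraph.cycleGraph 4).edgeSet →
      f = s(0,1) ∨ f = s(1,2) ∨ f = s(2,3) ∨ f = s(3,0) := by decide
  exact h e.1 e.2

lemma contains_of_config {n : ℕ} (G : SimpleGraph (Fin n))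
    (a b c d w0 w1 w2 w3 : Fin n)
    (hab : G.Adj a b) (hbc : G.Adj b c) (hcd : G.Adj c d) (hda : G.Adj d a)
    (h0a : G.Adj w0 a) (h0b : G.Adj w0 b)
    (h1b : G.Adj w1 b) (h1c : G.Adj w1 c)
    (h2c : G.Adj w2 c) (h2d : G.Adj w2 d)
    (h3d : G.Adj w3 d) (h3a : G.Adj w3 a)
    (hac : a ≠ c) (hbd : b ≠ d)
    (h0c : w0 ≠ c) (h0d : w0 ≠ d)
    (h1a : w1 ≠ a) (h1d : w1 ≠ d)
    (h2a : w2 ≠ a) (h2b : w2 ≠ b)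
    (h3b : w3 ≠ b) (h3c : w3 ≠ c)
    (h01 : w0 ≠ w1) (h02 : w0 ≠ w2) (h03 : w0 ≠ w3)
    (h12 : w1 ≠ w2) (h13 : w1 ≠ w3) (h23 : w2 ≠ w3) :
    Contains C4expansion G := by
  classical
  -- the vertex map
  set g : Fin 4 → Fin n := ![a, b, c, d] with hg
  set h : Sym2 (Fin 4) → Fin n := fun e =>
    if e = s(0,1) then w0 else if e = s(1,2) then w1 else if e = s(2,3) then w2 else w3
    with hh
  set f : (Fin 4) ⊕ (SimpleGraph.cycleGraph 4).edgeSet → Fin n :=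
    Sum.elim g (fun e => h e.1) with hf
  have hgval : g 0 = a ∧ g 1 = b ∧ g 2 = c ∧ g 3 = d := by
    refine ⟨rfl, rfl, rfl, rfl⟩
  -- adjacency preservation
  have hadj : ∀ u v, C4expansion.Adj u v → G.Adj (f u) (f v) := by
    intro u v huv
    rw [C4expansion, expansion, SimpleGraph.fromRel_adj] at huv
    obtain ⟨hne, hrel⟩ := huv
    have key : ∀ p q : (Fin 4) ⊕ (SimpleGraph.cycleGraph 4).edgeSet,
        ((∃ u v, p = Sum.inl u ∧ q = Sum.inl v ∧ (SimpleGraph.cycleGraph 4).Adj u v) ∨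
         (∃ u, ∃ e : (SimpleGraph.cycleGraph 4).edgeSet,
            p = Sum.inl u ∧ q = Sum.inr e ∧ u ∈ (e : Sym2 (Fin 4)))) →
        G.Adj (f p) (f q) := by
      rintro p q (⟨i, j, rfl, rfl, hij⟩ | ⟨i, e, rfl, rfl, hie⟩)
      · have : (i = 0 ∧ j = 1) ∨ (i = 1 ∧ j = 0) ∨ (i = 1 ∧ j = 2) ∨ (i = 2 ∧ j = 1) ∨
            (i = 2 ∧ j = 3) ∨ (i = 3 ∧ j = 2) ∨ (i = 3 ∧ j = 0) ∨ (i = 0 ∧ j = 3) := by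
          revert hij; revert i j; decide
        rcases this with ⟨rfl,rfl⟩|⟨rfl,rfl⟩|⟨rfl,rfl⟩|⟨rfl,rfl⟩|⟨rfl,rfl⟩|⟨rfl,rfl⟩|⟨rfl,rfl⟩|⟨rfl,rfl⟩ <;>
          simp only [hf, Sum.elim_inl, hg] <;>
          first
            | exact hab | exact hab.symm | exact hbc | exact hbc.symm
            | exact hcd | exact hcd.symm | exact hda | exact hda.symm
      · have hfi : f (Sum.inl i) = g i := rfl
        rcases edge_cases e with he | he | he | he
        · have hi : i = 0 ∨ i = 1 := by rw [he] at hie; exact (Sym2.mem_iff).mp hie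
          have hev : f (Sum.inr e) = w0 := by simp only [hf, Sum.elim_inr, hh, he]; rw [if_pos trivial]
          rcases hi with rfl | rfl <;> rw [hev] <;> simp only [hf, Sum.elim_inl, hg]
          · exact h0a.symm
          · exact h0b.symm
        · have hi : i = 1 ∨ i = 2 := by rw [he] at hie; exact (Sym2.mem_iff).mp hie
          have hev : f (Sum.inr e) = w1 := by simp only [hf, Sum.elim_inr, hh, he]; rw [if_neg (by decide), if_pos trivial]
          rcases hi with rfl | rfl <;> rw [hev] <;> simp only [hf, Sum.elim_inl, hg]
          · exact h1b.symm
          · exact h1c.symm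
        · have hi : i = 2 ∨ i = 3 := by rw [he] at hie; exact (Sym2.mem_iff).mp hie
          have hev : f (Sum.inr e) = w2 := by simp only [hf, Sum.elim_inr, hh, he]; rw [if_neg (by decide), if_neg (by decide), if_pos trivial]
          rcases hi with rfl | rfl <;> rw [hev] <;> simp only [hf, Sum.elim_inl, hg]
          · exact h2c.symm
          · exact h2d.symm
        · have hi : i = 3 ∨ i = 0 := by rw [he] at hie; exact (Sym2.mem_iff).mp hie
          have hev : f (Sum.inr e) = w3 := by simp only [hf, Sum.elim_inr, hh, he]; rw [if_neg (by decide), if_neg (by decide), if_neg (by decide)]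
          rcases hi with rfl | rfl <;> rw [hev] <;> simp only [hf, Sum.elim_inl, hg]
          · exact h3d.symm
          · exact h3a.symm
    rcases hrel with hrel | hrel
    · exact key u v (by exact hrel)
    · exact (key v u (by exact hrel)).symm
  -- distinctness facts
  have gne : ∀ i j : Fin 4, i ≠ j → g i ≠ g j := by
    intro i j hij
    have nab : a ≠ b := hab.ne
    have nbc : b ≠ c := hbc.ne
    have ncd : c ≠ d := hcd.ne
    have nda : d ≠ a := hda.ne
    fin_cases i <;> fin_cases j <;>
      first
        | exact absurd rfl hij
        | exact nab | exact nab.symm | exact hac | exact hac.symm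
        | exact nbc | exact nbc.symm | exact hbd | exact hbd.symm
        | exact ncd | exact ncd.symm | exact nda | exact nda.symm
  have hvals : ∀ e : (SimpleGraph.cycleGraph 4).edgeSet,
      h e.1 = w0 ∨ h e.1 = w1 ∨ h e.1 = w2 ∨ h e.1 = w3 := by
    intro e
    rcases edge_cases e with he | he | he | he <;> rw [hh] <;> simp only [he]
    · left; rw [if_pos trivial]
    · right; left; rw [if_neg (by decide), if_pos trivial]
    · right; right; left; rw [if_neg (by decide), if_neg (by decide), if_pos trivial]
    · right; right; right; rw [if_neg (by decide), if_neg (by decide), if_neg (by decide)]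
  have wg : ∀ (w : Fin n), (w = w0 ∨ w = w1 ∨ w = w2 ∨ w = w3) → ∀ i : Fin 4, g i ≠ w := by
    rintro w hw i
    fin_cases i <;> rcases hw with rfl | rfl | rfl | rfl <;>
      first
        | exact h0a.ne' | exact h0b.ne' | exact h0c.symm | exact h0d.symm
        | exact h1a.symm | exact h1b.ne' | exact h1c.ne' | exact h1d.symm
        | exact h2a.symm | exact h2b.symm | exact h2c.ne' | exact h2d.ne'
        | exact h3a.ne' | exact h3b.symm | exact h3c.symm | exact h3d.ne'
  have hinj : Function.Injective f := by
    rintro (i | e) (j | e') huv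
    · simp only [hf, Sum.elim_inl] at huv
      by_contra hne
      exact gne i j (fun hij => hne (congrArg Sum.inl hij)) huv
    · simp only [hf, Sum.elim_inl, Sum.elim_inr] at huv
      exact absurd huv (wg _ (hvals e') i)
    · simp only [hf, Sum.elim_inl, Sum.elim_inr] at huv
      exact absurd huv.symm (wg _ (hvals e) j)
    · simp only [hf, Sum.elim_inr] at huv
      have hev01 : h s(0,1) = w0 := by simp only [hh]; rw [if_pos trivial]
      have hev12 : h s(1,2) = w1 := by simp only [hh]; rw [if_neg (by decide), if_pos trivial]
      have hev23 : h s(2,3) = w2 := by simp only [hh]; rw [if_neg (by decide), if_neg (by decide), if_pos trivial]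
      have hev30 : h s(3,0) = w3 := by simp only [hh]; rw [if_neg (by decide), if_neg (by decide), if_neg (by decide)]
      congr 1
      apply Subtype.ext
      rcases edge_cases e with he | he | he | he <;> rcases edge_cases e' with he' | he' | he' | he' <;>
          rw [he, he'] <;> rw [he, he'] at huv
      all_goals first
        | rfl
        | (simp only [hev01, hev12, hev23, hev30] at huv;
           first
             | exact absurd huv h01 | exact absurd huv h02 | exact absurd huv h03
             | exact absurd huv h12 | exact absurd huv h13 | exact absurd huv h23
             | exact absurd huv h01.symm | exact absurd huv h02.symm | exact absurd huv h03.symm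
             | exact absurd huv h12.symm | exact absurd huv h13.symm | exact absurd huv h23.symm)
  exact ⟨⟨f, fun {p q} hpq => hadj p q hpq⟩, hinj⟩

lemma pick_lemma {n : ℕ} {S : Set (Fin n)} (hS : 8 ≤ S.ncard) (t1 t2 t3 t4 t5 : Fin n) :
    ∃ w ∈ S, w ≠ t1 ∧ w ≠ t2 ∧ w ≠ t3 ∧ w ≠ t4 ∧ w ≠ t5 := by
  by_contra hc
  have hsub : S ⊆ {t1, t2, t3, t4, t5} := by
    intro w hw
    by_contra hmem
    simp only [Set.mem_insert_iff, Set.mem_singleton_iff, not_or] at hmem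
    exact hc ⟨w, hw, hmem.1, hmem.2.1, hmem.2.2.1, hmem.2.2.2.1, hmem.2.2.2.2⟩
  have h1 := Set.ncard_le_ncard hsub (Set.toFinite _)
  have a4 := Set.ncard_insert_le t1 ({t2,t3,t4,t5} : Set (Fin n))
  have a3 := Set.ncard_insert_le t2 ({t3,t4,t5} : Set (Fin n))
  have a2 := Set.ncard_insert_le t3 ({t4,t5} : Set (Fin n))
  have a1 := Set.ncard_insert_le t4 ({t5} : Set (Fin n))
  have a0 : ({t5} : Set (Fin n)).ncard = 1 := Set.ncard_singleton _
  omega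

set_option linter.unnecessarySeqFocus false in
lemma codeg_lower {n : ℕ} {G : SimpleGraph (Fin n)} {y z : Fin n} {V : Set (Fin n)}
    (hy : 2 * (n:ℝ) / 5 ≤ ((G.neighborSet y ∩ V).ncard : ℝ))
    (hz : 2 * (n:ℝ) / 5 ≤ ((G.neighborSet z ∩ V).ncard : ℝ))
    (hV : ((V.ncard : ℝ)) ≤ 11 * (n:ℝ) / 20) (hn : (1600:ℝ) ≤ (n:ℝ)) :
    8 ≤ {w | G.Adj y w ∧ G.Adj z w}.ncard := by
  set P := G.neighborSet y ∩ V with hP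
  set Q := G.neighborSet z ∩ V with hQ
  have hsub : P ∩ Q ⊆ {w | G.Adj y w ∧ G.Adj z w} := by
    rintro w ⟨⟨h1, _⟩, ⟨h2, _⟩⟩; exact ⟨h1, h2⟩
  have hie := Set.ncard_inter_add_ncard_union P Q (Set.toFinite _) (Set.toFinite _)
  have hun : (P ∪ Q).ncard ≤ V.ncard := by
    refine Set.ncard_le_ncard ?_ (Set.toFinite _)
    rintro w (⟨_, h⟩ | ⟨_, h⟩) <;> · exact h
  have hcard : (8:ℝ) ≤ ((P ∩ Q).ncard : ℝ) := by
    have h1 : ((P ∩ Q).ncard : ℝ) + ((P ∪ Q).ncard : ℝ) = (P.ncard : ℝ) + (Q.ncard : ℝ) := by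
      exact_mod_cast congrArg (Nat.cast : ℕ → ℝ) hie
    have h2 : ((P ∪ Q).ncard : ℝ) ≤ (V.ncard : ℝ) := by exact_mod_cast hun
    linarith
  have : (8:ℝ) ≤ ({w | G.Adj y w ∧ G.Adj z w}.ncard : ℝ) := by
    have := Set.ncard_le_ncard hsub (Set.toFinite _)
    have : ((P ∩ Q).ncard : ℝ) ≤ ({w | G.Adj y w ∧ G.Adj z w}.ncard : ℝ) := by exact_mod_cast this
    linarith
  exact_mod_cast this

lemma xcodeg {n : ℕ} {k : ℕ} (hk : (n:ℝ)/200 ≤ (k:ℝ)) (hn : (1600:ℝ) ≤ (n:ℝ)) : 8 ≤ k := by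
  have : (8:ℝ) ≤ (k:ℝ) := by linarith
  exact_mod_cast this

lemma parts_small {n : ℕ} {G : SimpleGraph (Fin n)} {x : Fin n} {V1 V2 : Set (Fin n)} {δ : ℝ}
    (hδ : 0 < δ) (hδle : δ ≤ 1/3200) (hn : (1600:ℝ) ≤ (n:ℝ))
    (hdis : Disjoint V1 V2) (hunion : V1 ∪ V2 = {x}ᶜ)
    (hcross : (n : ℝ) ^ 2 / 4 - 2 * δ * (n : ℝ) ^ 2 ≤ (crossEdges G V1 V2 : ℝ)) :
    (V1.ncard : ℝ) ≤ 11 * (n:ℝ) / 20 ∧ (V2.ncard : ℝ) ≤ 11 * (n:ℝ) / 20 := by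
  classical
  have hsum : V1.ncard + V2.ncard = n - 1 := by
    have h1 : (V1 ∪ V2).ncard = V1.ncard + V2.ncard :=
      Set.ncard_union_eq hdis (Set.toFinite _) (Set.toFinite _)
    have h3 := Set.ncard_add_ncard_compl ({x} : Set (Fin n)) (Set.toFinite _) (Set.toFinite _)
    rw [Set.ncard_singleton] at h3
    have h4 : Nat.card (Fin n) = n := by simp
    rw [hunion] at h1
    omega
  have hprodcard : (V1 ×ˢ V2).ncard = V1.ncard * V2.ncard := by
    rw [Set.ncard_eq_toFinset_card', Set.ncard_eq_toFinset_card', Set.ncard_eq_toFinset_card',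
      Set.toFinset_prod, Finset.card_product]
  have hcle : crossEdges G V1 V2 ≤ V1.ncard * V2.ncard := by
    rw [crossEdges, ← hprodcard]
    exact Set.ncard_le_ncard (fun p hp => ⟨hp.1, hp.2.1⟩) (Set.toFinite _)
  have hge1 : (1:ℕ) ≤ n := by
    by_contra hcc
    interval_cases n
    norm_num at hn
  have hsr : (V1.ncard : ℝ) + (V2.ncard : ℝ) = (n:ℝ) - 1 := by
    have h0 : ((V1.ncard + V2.ncard : ℕ) : ℝ) = ((n - 1 : ℕ) : ℝ) := by rw [hsum]
    rw [Nat.cast_sub hge1] at h0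
    push_cast at h0
    linarith
  have hcr : (n:ℝ)^2/4 - 2 * δ * (n:ℝ)^2 ≤ (V1.ncard : ℝ) * (V2.ncard : ℝ) := by
    refine le_trans hcross ?_
    exact_mod_cast hcle
  have hn2 : (0:ℝ) ≤ (n:ℝ) := by linarith
  have h1nn : (0:ℝ) ≤ (V1.ncard:ℝ) := Nat.cast_nonneg _
  have h2nn : (0:ℝ) ≤ (V2.ncard:ℝ) := Nat.cast_nonneg _
  have hδn : δ * (n:ℝ)^2 ≤ (1/3200) * (n:ℝ)^2 :=
    mul_le_mul_of_nonneg_right hδle (sq_nonneg _)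
  constructor
  · by_contra hcon
    push_neg at hcon
    have hts : (V2.ncard:ℝ) = (n:ℝ) - 1 - (V1.ncard:ℝ) := by linarith
    have hprod : (V1.ncard:ℝ) * (V2.ncard:ℝ)
        = (V1.ncard:ℝ) * (n:ℝ) - (V1.ncard:ℝ) - (V1.ncard:ℝ) * (V1.ncard:ℝ) := by
      rw [hts]; ring
    nlinarith [mul_nonneg
      (by linarith : (0:ℝ) ≤ (V1.ncard:ℝ) - 11*(n:ℝ)/20)
      (by linarith : (0:ℝ) ≤ (V1.ncard:ℝ) - 9*(n:ℝ)/20 + 1)]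
  · by_contra hcon
    push_neg at hcon
    have hts : (V1.ncard:ℝ) = (n:ℝ) - 1 - (V2.ncard:ℝ) := by linarith
    have hprod : (V1.ncard:ℝ) * (V2.ncard:ℝ)
        = (V2.ncard:ℝ) * (n:ℝ) - (V2.ncard:ℝ) - (V2.ncard:ℝ) * (V2.ncard:ℝ) := by
      rw [hts]; ring
    nlinarith [mul_nonneg
      (by linarith : (0:ℝ) ≤ (V2.ncard:ℝ) - 11*(n:ℝ)/20)
      (by linarith : (0:ℝ) ≤ (V2.ncard:ℝ) - 9*(n:ℝ)/20 + 1)]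

lemma core_false {n : ℕ} {G : SimpleGraph (Fin n)} (hfree : _root_.Free C4expansion G)
    {x b c d p : Fin n}
    (hxb : G.Adj x b) (hbc : G.Adj b c) (hcd : G.Adj c d) (hdx : G.Adj d x)
    (hpb : G.Adj p b) (hpc : G.Adj p c)
    (hxc : x ≠ c) (hbd : b ≠ d) (hpx : p ≠ x) (hpd : p ≠ d)
    (hS2 : 8 ≤ {w | G.Adj c w ∧ G.Adj d w}.ncard)
    (hS0 : 8 ≤ {w | G.Adj b w ∧ G.Adj x w}.ncard)
    (hS3 : 8 ≤ {w | G.Adj d w ∧ G.Adj x w}.ncard) : False := by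
  obtain ⟨w2, hw2, hw2x, hw2b, hw2p, -, -⟩ := pick_lemma hS2 x b p p p
  obtain ⟨w0, hw0, hw0c, hw0d, hw0p, hw0w2, -⟩ := pick_lemma hS0 c d p w2 w2
  obtain ⟨w3, hw3, hw3b, hw3c, hw3p, hw3w2, hw3w0⟩ := pick_lemma hS3 b c p w2 w0
  exact hfree (contains_of_config G x b c d w0 p w2 w3
    hxb hbc hcd hdx hw0.2.symm hw0.1.symm hpb hpc hw2.1.symm hw2.2.symm hw3.1.symm hw3.2.symm
    hxc hbd hw0c hw0d hpx hpd hw2x hw2b hw3b hw3c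
    hw0p hw0w2 (Ne.symm hw3w0) (Ne.symm hw2p) (Ne.symm hw3p) (Ne.symm hw3w2))

/-- There exist `δ₀ > 0` and `n₀` such that for all `0 < δ ≤ δ₀` and `n ≥ n₀`,
under the Setup: if `u₁v₁` is an edge of `G` inside `D₁'` and `u₂v₂` is an edge of `G`
inside `D₂'`, then no triangle of `G` consists of `u₁, v₁` and one of `u₂, v₂`, and no
triangle of `G` consists of `u₂, v₂` and one of `u₁, v₁`. -/
theorem stmt19 : ∃ δ0 : ℝ, 0 < δ0 ∧ ∃ n0 : ℕ,
    ∀ δ : ℝ, 0 < δ → δ ≤ δ0 → ∀ n : ℕ, n0 ≤ n →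
    ∀ G : SimpleGraph (Fin n), _root_.Free C4expansion G →
    (∀ u v : Fin n, G.Adj u v → ∃ w : Fin n, G.Adj u w ∧ G.Adj v w) →
    ∀ (x : Fin n) (V1 V2 : Set (Fin n)),
    Disjoint V1 V2 → V1 ∪ V2 = {x}ᶜ →
    (∀ W1 W2 : Set (Fin n), Disjoint W1 W2 → W1 ∪ W2 = {x}ᶜ →
      crossEdges G W1 W2 ≤ crossEdges G V1 V2) →
    ((n : ℝ) ^ 2 / 4 - 2 * δ * (n : ℝ) ^ 2 ≤ (crossEdges G V1 V2 : ℝ)) →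
    ∀ D : Set (Fin n),
    D = {v : Fin n | v ≠ x ∧ G.Adj v x ∧
      (n : ℝ) / 200 ≤ (edgeTriangleDeg G v x : ℝ)} →
    ∀ D1 D2 : Set (Fin n), D1 = D ∩ V1 → D2 = D ∩ V2 →
    ∀ D1' D2' : Set (Fin n),
    D1' = {v ∈ D1 | 2 * (n : ℝ) / 5 ≤ ((G.neighborSet v ∩ V2).ncard : ℝ)} →
    D2' = {v ∈ D2 | 2 * (n : ℝ) / 5 ≤ ((G.neighborSet v ∩ V1).ncard : ℝ)} →
    ∀ u1 v1 u2 v2 : Fin n,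
    u1 ∈ D1' → v1 ∈ D1' → G.Adj u1 v1 →
    u2 ∈ D2' → v2 ∈ D2' → G.Adj u2 v2 →
      (¬(G.Adj u1 u2 ∧ G.Adj v1 u2) ∧ ¬(G.Adj u1 v2 ∧ G.Adj v1 v2) ∧
        ¬(G.Adj u2 u1 ∧ G.Adj v2 u1) ∧ ¬(G.Adj u2 v1 ∧ G.Adj v2 v1)) := by
  refine ⟨1/3200, by norm_num, 1600, ?_⟩
  intro δ hδ hδle n hn G hfree htri x V1 V2 hdis hunion hmax hcross D hD D1 D2 hD1 hD2
    D1' D2' hD1' hD2' u1 v1 u2 v2 hu1 hv1 h11 hu2 hv2 h22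
  have hnR : (1600:ℝ) ≤ (n:ℝ) := by exact_mod_cast hn
  obtain ⟨hV1, hV2⟩ := parts_small (G := G) hδ hδle hnR hdis hunion hcross
  rw [hD1'] at hu1 hv1
  rw [hD2'] at hu2 hv2
  obtain ⟨hu1D1, hu1N⟩ := hu1
  obtain ⟨hv1D1, hv1N⟩ := hv1
  obtain ⟨hu2D2, hu2N⟩ := hu2
  obtain ⟨hv2D2, hv2N⟩ := hv2
  rw [hD1] at hu1D1 hv1D1
  rw [hD2] at hu2D2 hv2D2
  obtain ⟨hu1D, hu1V1⟩ := hu1D1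
  obtain ⟨hv1D, hv1V1⟩ := hv1D1
  obtain ⟨hu2D, hu2V2⟩ := hu2D2
  obtain ⟨hv2D, hv2V2⟩ := hv2D2
  rw [hD] at hu1D hv1D hu2D hv2D
  obtain ⟨hu1x, hu1adj, hu1deg⟩ := hu1D
  obtain ⟨hv1x, hv1adj, hv1deg⟩ := hv1D
  obtain ⟨hu2x, hu2adj, hu2deg⟩ := hu2D
  obtain ⟨hv2x, hv2adj, hv2deg⟩ := hv2D
  have h12dis : ∀ a ∈ V1, ∀ b ∈ V2, a ≠ b := fun a ha b hb hab =>
    (Set.disjoint_left.mp hdis ha) (hab ▸ hb)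
  have hdeg : ∀ v : Fin n, (n:ℝ)/200 ≤ (edgeTriangleDeg G v x : ℝ) →
      8 ≤ {w | G.Adj v w ∧ G.Adj x w}.ncard := fun v hv => by
    have h8 : 8 ≤ edgeTriangleDeg G v x := xcodeg hv hnR
    exact h8
  refine ⟨?_, ?_, ?_, ?_⟩ <;> rintro ⟨h1, h2⟩
  · exact core_false hfree hu1adj.symm h1 h22 hv2adj h11.symm h2
      (Ne.symm hu2x) (h12dis u1 hu1V1 v2 hv2V2) hv1x (h12dis v1 hv1V1 v2 hv2V2)
      (codeg_lower hu2N hv2N hV1 hnR) (hdeg u1 hu1deg) (hdeg v2 hv2deg)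
  · exact core_false hfree hu1adj.symm h1 h22.symm hu2adj h11.symm h2
      (Ne.symm hv2x) (h12dis u1 hu1V1 u2 hu2V2) hv1x (h12dis v1 hv1V1 u2 hu2V2)
      (codeg_lower hv2N hu2N hV1 hnR) (hdeg u1 hu1deg) (hdeg u2 hu2deg)
  · exact core_false hfree hu2adj.symm h1 h11 hv1adj h22.symm h2
      (Ne.symm hu1x) (Ne.symm (h12dis v1 hv1V1 u2 hu2V2)) hv2x
      (Ne.symm (h12dis v1 hv1V1 v2 hv2V2))
      (codeg_lower hu1N hv1N hV2 hnR) (hdeg u2 hu2deg) (hdeg v1 hv1deg)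
  · exact core_false hfree hu2adj.symm h1 h11.symm hu1adj h22.symm h2
      (Ne.symm hv1x) (Ne.symm (h12dis u1 hu1V1 u2 hu2V2)) hv2x
      (Ne.symm (h12dis u1 hu1V1 v2 hv2V2))
      (codeg_lower hv1N hu1N hV2 hnR) (hdeg u2 hu2deg) (hdeg u1 hu1deg)
end
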